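/- Let E be a linearly ordered field, O a convex subring of E, and b an element of an ordered field extension of E with O < b < E^{>O}. Then the coinitiality of {x ∈ E : x > b} equals the coinitiality of {x ∈ E : x > 0 and O < x} , which in turn corresponds to the cofinality of the negative part of the value group: explicitly, the map x ↦ 1/x gives an order-reversing bijection between E^{>b} ∩ E^{>O} and a coinitial segment of the positive infinitesimals, so coin(E^{>b}) = coin(E^{>O}). -/

import Mathlib

open Cardinal

/-- The coinitiality of a subset `X` of a preorder: the least cardinality of a
subset of `X` that is coinitial in `X`. -/
noncomputable def coinOf {α : Type*} [Preorder α] (X : Set α) : Cardinal :=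
  sInf {c | ∃ Y : Set α, Y ⊆ X ∧ (∀ x ∈ X, ∃ y ∈ Y, y ≤ x) ∧ c = #Y}

theorem setOf_lt_apply_eq_of_realizes_cut {α β : Type*} [LinearOrder α] [Preorder β]
    {f : α → β} (hf : Monotone f) {S : Set α} {b : β}
    (hlow : ∀ o ∈ S, f o < b) (hhigh : ∀ y, (∀ o ∈ S, o < y) → b < f y) :
    {x | b < f x} = {x | ∀ o ∈ S, o < x} := by
  ext x
  exact ⟨fun hx o ho => hf.reflect_lt ((hlow o ho).trans hx), hhigh x⟩

theorem stmt2_general {E F : Type*} [Field E] [LinearOrder E] [IsStrictOrderedRing E]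
    [Field F] [LinearOrder F] [IsStrictOrderedRing F]
    (f : E →+*o F) (O : Subring E)
    (b : F)
    (hlow : ∀ o ∈ O, f o < b)
    (hhigh : ∀ y : E, (∀ o ∈ O, o < y) → b < f y) :
    coinOf {x : E | b < f x} = coinOf {x : E | 0 < x ∧ ∀ o ∈ O, o < x} := by
  have hpos : {x : E | 0 < x ∧ ∀ o ∈ O, o < x} = {x | ∀ o ∈ O, o < x} := by
    ext x
    exact and_iff_right_of_imp fun hx => hx 0 O.zero_mem
  rw [hpos]
  exact congrArg coinOf (setOf_lt_apply_eq_of_realizes_cut (OrderHomClass.mono f) hlow hhigh)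

/-- if `O` is a convex subring of a linearly ordered field `E`,
`f : E →+*o F` an ordered field extension, and `b ∈ F` realizes the cut
`O < b < E^{>O}`, then the coinitiality of `{x ∈ E : x > b}` equals the
coinitiality of `{x ∈ E : 0 < x ∧ O < x}`. -/
theorem stmt2 {E F : Type*} [Field E] [LinearOrder E] [IsStrictOrderedRing E]
    [Field F] [LinearOrder F] [IsStrictOrderedRing F]
    (f : E →+*o F) (O : Subring E)
    (hconv : ∀ a b : E, 0 ≤ a → a ≤ b → b ∈ O → a ∈ O)
    (b : F)
    (hlow : ∀ o ∈ O, f o < b)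
    (hhigh : ∀ y : E, (∀ o ∈ O, o < y) → b < f y) :
    coinOf {x : E | b < f x} = coinOf {x : E | 0 < x ∧ ∀ o ∈ O, o < x} :=
  stmt2_general f O b hlow hhigh
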